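/- For every natural number n and all real a and t, Q_n^{(a)}(t) equals the sum, over all Motzkin paths of length n, of the path weight determined by b_h = (2h+a)·t and λ_h = h·(h−1+a)·(1+t^2). (Equivalently, the ordinary generating function ∑_{n≥0} Q_n^{(a)}(t)·z^n has the Jacobi continued fraction expansion 𝔍((2h+a)t, h(h−1+a)(1+t^2)).) -/

import Mathlib

open Polynomial

/-- A step of a Motzkin path. -/
inductive MStep : Type
  | up : MStep
  | level : MStep
  | down : MStep
  deriving DecidableEq

instance instFintypeMStep : Fintype MStep :=
  ⟨{MStep.up, MStep.level, MStep.down}, fun x => by cases x <;> simp⟩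

/-- Whether a word of Motzkin steps, started at height `h`, stays nonnegative
(never steps down from height 0) and ends at height 0. -/
def isMotzkinFrom : List MStep → ℕ → Bool
  | [], h => h == 0
  | MStep.up :: rest, h => isMotzkinFrom rest (h + 1)
  | MStep.level :: rest, h => isMotzkinFrom rest h
  | MStep.down :: rest, h => h != 0 && isMotzkinFrom rest (h - 1)

/-- The weight of a Motzkin path started at height `h`: each up step has weight `1`,
each level step at height `h` has weight `b h`, and each down step from height `h`
to `h-1` has weight `lam h`. -/
def mweight {R : Type*} [CommRing R] (b : ℕ → R) (lam : ℕ → R) : List MStep → ℕ → R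
  | [], _ => 1
  | MStep.up :: rest, h => mweight b lam rest (h + 1)
  | MStep.level :: rest, h => b h * mweight b lam rest h
  | MStep.down :: rest, h => lam h * mweight b lam rest (h - 1)

/-- The derivative polynomials `Q_n^{(a)}`:
`Q_0^{(a)} = 1`, `Q_{n+1}^{(a)} = (1+t²)·(Q_n^{(a)})' + a·t·Q_n^{(a)}`. -/
noncomputable def polyQ (a : ℝ) : ℕ → Polynomial ℝ
  | 0 => 1
  | n + 1 => (1 + X ^ 2) * derivative (polyQ a n) + C a * X * polyQ a n

/-! The numbers `F n h = (1 + t²)^h · (Q_n^{(a)})^{(h)}(t)` satisfy `F 0 h = [h = 0]` and, by the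
Leibniz rule applied to the recurrence for `Q`,
`F (n+1) h = F n (h+1) + (2h+a) t · F n h + h (h-1+a) (1+t²) · F n (h-1)`.
Splitting a Motzkin path started at height `h` according to its first step gives the same
recurrence for the weighted path sums, so the two families agree, and `F n 0 = Q_n^{(a)}(t)`. -/

section MotzkinSum

variable {R : Type*} [CommRing R] (b lam : ℕ → R)

noncomputable def motzkinWeight (w : List MStep) (h : ℕ) : R :=
  if isMotzkinFrom w h then mweight b lam w h else 0

lemma motzkinWeight_nil (h : ℕ) : motzkinWeight b lam [] h = if h = 0 then 1 else 0 := by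
  simp [motzkinWeight, isMotzkinFrom, mweight]

lemma motzkinWeight_up (w : List MStep) (h : ℕ) :
    motzkinWeight b lam (.up :: w) h = motzkinWeight b lam w (h + 1) :=
  rfl

lemma motzkinWeight_level (w : List MStep) (h : ℕ) :
    motzkinWeight b lam (.level :: w) h = b h * motzkinWeight b lam w h := by
  rw [motzkinWeight, motzkinWeight, mul_ite, mul_zero]
  rfl

lemma motzkinWeight_down (hlam : lam 0 = 0) (w : List MStep) (h : ℕ) :
    motzkinWeight b lam (.down :: w) h = lam h * motzkinWeight b lam w (h - 1) := by
  cases h with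
  | zero => simp [motzkinWeight, isMotzkinFrom, hlam]
  | succ k => simp [motzkinWeight, isMotzkinFrom, mweight, mul_ite]

/-- The weighted sum over all Motzkin paths of length `n` from height `h` down to height `0`. -/
noncomputable def motzkinSum (n h : ℕ) : R :=
  ∑ f : Fin n → MStep, motzkinWeight b lam (List.ofFn f) h

lemma motzkinSum_zero (h : ℕ) : motzkinSum b lam 0 h = if h = 0 then 1 else 0 := by
  simp [motzkinSum, motzkinWeight_nil]

lemma sum_mStep {M : Type*} [AddCommMonoid M] (g : MStep → M) :
    ∑ x, g x = g .up + g .level + g .down := by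
  rw [show (Finset.univ : Finset MStep) = {.up, .level, .down} from rfl,
    Finset.sum_insert (by decide), Finset.sum_insert (by decide), Finset.sum_singleton, add_assoc]

lemma motzkinSum_succ (hlam : lam 0 = 0) (n h : ℕ) :
    motzkinSum b lam (n + 1) h = motzkinSum b lam n (h + 1) + b h * motzkinSum b lam n h
      + lam h * motzkinSum b lam n (h - 1) := by
  simp only [motzkinSum, ← (Fin.consEquiv fun _ => MStep).sum_comp, Fintype.sum_prod_type,
    sum_mStep, Fin.consEquiv, Equiv.coe_fn_mk, List.ofFn_succ, Fin.cons_zero, Fin.cons_succ,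
    motzkinWeight_up, motzkinWeight_level, motzkinWeight_down b lam hlam, Finset.mul_sum]

end MotzkinSum

lemma iterate_derivative_one_add_X_sq_mul_derivative_add {R : Type*} [CommRing R] (a : R)
    (Q : R[X]) (h : ℕ) :
    derivative^[h] ((1 + X ^ 2) * derivative Q + C a * X * Q) =
      (1 + X ^ 2) * derivative^[h + 1] Q + C (2 * h + a) * X * derivative^[h] Q
        + C (h * (h - 1 + a)) * derivative^[h - 1] Q := by
  have step (m : ℕ) : derivative (derivative^[m] Q) = derivative^[m + 1] Q :=
    (Function.iterate_succ_apply' _ _ _).symm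
  induction h with
  | zero => simp
  | succ k ih =>
    -- for `k = 0` the truncated `k - 1 + 1 = 1` is harmless: its coefficient is `0`
    have lower : C ((k : R) * (k - 1 + a)) * derivative^[k - 1 + 1] Q
        = C ((k : R) * (k - 1 + a)) * derivative^[k] Q := by
      cases k <;> simp
    rw [Function.iterate_succ_apply', ih]
    simp only [derivative_add, derivative_mul, derivative_one, derivative_X_pow, derivative_X,
      derivative_C, step, zero_mul, zero_add, lower, Nat.add_sub_cancel]
    simp only [map_add, map_mul, map_sub, map_natCast, map_one, C_ofNat]
    push_cast
    ring

lemma one_add_sq_pow_mul_eval_iterate_derivative_polyQ (a t : ℝ) (n h : ℕ) :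
    (1 + t ^ 2) ^ h * (derivative^[h] (polyQ a n)).eval t
      = motzkinSum (fun k => (2 * (k : ℝ) + a) * t)
          (fun k => (k : ℝ) * ((k : ℝ) - 1 + a) * (1 + t ^ 2)) n h := by
  induction n generalizing h with
  | zero =>
    rw [motzkinSum_zero]
    cases h with
    | zero => simp [polyQ]
    | succ k => simp [polyQ, iterate_derivative_one]
  | succ n ih =>
    rw [motzkinSum_succ _ _ (by simp), ← ih, ← ih, ← ih, polyQ,
      iterate_derivative_one_add_X_sq_mul_derivative_add]
    cases h with
    | zero => simp
    | succ k =>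
      simp only [eval_mul, eval_add, eval_pow, eval_one, eval_X, eval_C, Nat.add_sub_cancel]
      push_cast
      ring

theorem stmt17 (n : ℕ) (a t : ℝ) :
    (polyQ a n).eval t = ∑ f : Fin n → MStep,
      if isMotzkinFrom (List.ofFn f) 0 then
        mweight (fun h => (2 * (h : ℝ) + a) * t)
          (fun h => (h : ℝ) * ((h : ℝ) - 1 + a) * (1 + t ^ 2)) (List.ofFn f) 0
      else 0 := by
  simpa [motzkinSum, motzkinWeight] using one_add_sq_pow_mul_eval_iterate_derivative_polyQ a t n 0
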